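/- arXiv:0801.4556 — 5 statements merged into one kernel-verified Lean document; each statement's English description precedes it below -/
import Mathlib

section
/- (Orbit lemma) Let (Π, g) be an n-dimensional Boolean system and let S be the multiset of states in a periodic orbit of g. Let k ∈ [n] be such that the bias Λ of the regulatory function g_k satisfies |Λ − 1/2| ≥ ε, where 0 < ε < 1/2, and let I be the set of input variables of g_k. Then for any 0 < τ < 1/2, either ζ*_I(S) ≥ τ/2^{|I|} or ζ*_{{k}}(S) ≥ (1−τ)ε − τ/2. -/
open Finset

/-- `φ` depends on input variable `i`. -/
def BoolFunDependsOn {n : ℕ} (φ : (Fin n → Bool) → Bool) (i : Fin n) : Prop :=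
  ∃ s r : Fin n → Bool, (∀ j, j ≠ i → s j = r j) ∧ φ s ≠ φ r

/-!
Since `g_k` reads only the variables in `I`, the coordinate `s^{t+1}_k` is determined by the
pattern of `s^t` on `I`; by periodicity, the number of times `s_k = b` along the orbit is therefore
the sum, over the patterns `σ` with `g_k(σ) = b`, of the number of visits to `σ`. If every pattern
is visited with frequency more than `(1 - τ) / 2^|I|`, take `b` on the side of the bias: at least
`(1/2 + ε) 2^|I|` patterns are sent to `b`, so `s_k = b` with frequency at least
`(1/2 + ε)(1 - τ)`, and `s_k = !b` with frequency at most `1 - (1/2 + ε)(1 - τ)`.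
-/

variable {n : ℕ}

theorem BoolFunDependsOn.apply_eq_of_agreeOn {φ : (Fin n → Bool) → Bool} {I : Finset (Fin n)}
    (hI : ∀ i, BoolFunDependsOn φ i → i ∈ I) {x y : Fin n → Bool}
    (hxy : ∀ i ∈ I, x i = y i) : φ x = φ y := by
  suffices h : ∀ J : Finset (Fin n), ∀ x : Fin n → Bool,
      (∀ i ∈ I, x i = y i) → (∀ i ∉ J, x i = y i) → φ x = φ y from
    h univ x hxy (by simp)
  intro J
  induction J using Finset.induction_on with
  | empty => exact fun x _ hx => congrArg φ (funext fun i => hx i (notMem_empty i))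
  | insert a J _ ih =>
    intro x hxI hxJ
    set x' := Function.update x a (y a)
    have hx' : φ x = φ x' := by
      by_cases ha : a ∈ I
      · rw [show x' = x by simp [x', hxI a ha]]
      · by_contra hne
        exact ha (hI a ⟨x, x', fun j hj => (Function.update_of_ne hj _ _).symm, hne⟩)
    rw [hx']
    refine ih x' (fun i hi => ?_) (fun i hi => ?_) <;> by_cases hia : i = a
    · simp [x', hia]
    · simp [x', hia, hxI i hi]
    · simp [x', hia]
    · simp [x', hia, hxJ i (by simp [hia, hi])]

theorem card_filter_agreeOn_compl (I : Finset (Fin n)) (σ : Fin n → Bool) :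
    #{x : Fin n → Bool | ∀ i ∉ I, x i = σ i} = 2 ^ #I := by
  have : ({x : Fin n → Bool | ∀ i ∉ I, x i = σ i} : Finset _)
      = Fintype.piFinset fun i => if i ∈ I then univ else {σ i} := by
    ext x
    simp only [mem_filter, mem_univ, true_and, Fintype.mem_piFinset]
    refine ⟨fun hx i => ?_, fun hx i hi => by simpa [hi] using hx i⟩
    by_cases hi : i ∈ I <;> simp [hi, hx]
  rw [this, Fintype.card_piFinset]
  simp [apply_ite card, prod_ite_mem]

theorem card_filter_agreeOn (I : Finset (Fin n)) (σ : Fin n → Bool) :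
    #{x : Fin n → Bool | ∀ i ∈ I, x i = σ i} = 2 ^ (n - #I) := by
  simpa [card_compl] using card_filter_agreeOn_compl Iᶜ σ

/-- An assignment to the variables in `I` is represented by the state that agrees with it on `I`
and is `false` elsewhere. -/
def patternsOn (I : Finset (Fin n)) : Finset (Fin n → Bool) :=
  {σ | ∀ i ∉ I, σ i = false}

theorem card_patternsOn (I : Finset (Fin n)) : #(patternsOn I) = 2 ^ #I :=
  card_filter_agreeOn_compl I fun _ => false

theorem card_filter_eq_sum_patternsOn {α : Type*} {φ : (Fin n → Bool) → Bool}
    {I : Finset (Fin n)} (hI : ∀ i, BoolFunDependsOn φ i → i ∈ I)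
    (A : Finset α) (f : α → Fin n → Bool) (b : Bool) :
    #{a ∈ A | φ (f a) = b} = ∑ σ ∈ patternsOn I with φ σ = b, #{a ∈ A | ∀ i ∈ I, f a i = σ i} := by
  have hφ : ∀ x, φ (I.piecewise x fun _ => false) = φ x := fun x =>
    BoolFunDependsOn.apply_eq_of_agreeOn hI fun i hi => piecewise_eq_of_mem _ _ _ hi
  have hmaps : ∀ a ∈ ({a ∈ A | φ (f a) = b} : Finset α),
      I.piecewise (f a) (fun _ => false) ∈ ({σ ∈ patternsOn I | φ σ = b} : Finset _) := by
    intro a ha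
    simp only [mem_filter, patternsOn, mem_univ, true_and] at ha ⊢
    exact ⟨fun i hi => piecewise_eq_of_notMem _ _ _ hi, (hφ _).trans ha.2⟩
  rw [card_eq_sum_card_fiberwise hmaps]
  refine sum_congr rfl fun σ hσ => congrArg card ?_
  simp only [mem_filter, patternsOn, mem_univ, true_and] at hσ
  have hpw : ∀ x, I.piecewise x (fun _ => false) = σ ↔ ∀ i ∈ I, x i = σ i := fun x =>
    ⟨fun h i hi => by rw [← h, piecewise_eq_of_mem _ _ _ hi], fun h => funext fun i => by
      by_cases hi : i ∈ I <;> simp [hi, h, hσ.1]⟩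
  ext a
  simp only [mem_filter, hpw]
  refine ⟨fun ⟨⟨ha, _⟩, h⟩ => ⟨ha, h⟩, fun ⟨ha, h⟩ => ⟨⟨ha, ?_⟩, h⟩⟩
  rw [← hσ.2]
  exact BoolFunDependsOn.apply_eq_of_agreeOn hI h

theorem card_filter_eq_card_patternsOn_mul {φ : (Fin n → Bool) → Bool} {I : Finset (Fin n)}
    (hI : ∀ i, BoolFunDependsOn φ i → i ∈ I) (b : Bool) :
    #{x | φ x = b} = #{σ ∈ patternsOn I | φ σ = b} * 2 ^ (n - #I) := by
  simpa [card_filter_agreeOn] using card_filter_eq_sum_patternsOn hI univ id b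

theorem card_patternsOn_true_add_false (φ : (Fin n → Bool) → Bool) (I : Finset (Fin n)) :
    #{σ ∈ patternsOn I | φ σ = true} + #{σ ∈ patternsOn I | φ σ = false} = 2 ^ #I := by
  simpa [card_patternsOn] using card_filter_add_card_filter_not (s := patternsOn I) (φ · = true)

theorem bias_eq_card_patternsOn_div {φ : (Fin n → Bool) → Bool} {I : Finset (Fin n)}
    (hI : ∀ i, BoolFunDependsOn φ i → i ∈ I) :
    (#{x | φ x = true} : ℝ) / 2 ^ n = #{σ ∈ patternsOn I | φ σ = true} / 2 ^ #I := by
  have h2n : (2 : ℝ) ^ n = 2 ^ #I * 2 ^ (n - #I) := by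
    rw [← pow_add, Nat.add_sub_cancel' (card_le_univ I |>.trans_eq (Fintype.card_fin n))]
  rw [card_filter_eq_card_patternsOn_mul hI, h2n, Nat.cast_mul, Nat.cast_pow, Nat.cast_ofNat,
    mul_div_mul_right _ _ (by positivity)]

theorem exists_card_patternsOn_ge_of_bias {φ : (Fin n → Bool) → Bool} {I : Finset (Fin n)}
    (hI : ∀ i, BoolFunDependsOn φ i → i ∈ I) {ε : ℝ}
    (hbias : |(#{x | φ x = true} : ℝ) / 2 ^ n - 1 / 2| ≥ ε) :
    ∃ b, (1 / 2 + ε) * 2 ^ #I ≤ #{σ ∈ patternsOn I | φ σ = b} := by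
  have h2I : (0 : ℝ) < 2 ^ #I := by positivity
  have hsplit : (#{σ ∈ patternsOn I | φ σ = true} : ℝ) + #{σ ∈ patternsOn I | φ σ = false}
      = 2 ^ #I := by exact_mod_cast card_patternsOn_true_add_false φ I
  rw [bias_eq_card_patternsOn_div hI, ge_iff_le, le_abs] at hbias
  rcases hbias with h | h
  · exact ⟨true, (le_div_iff₀ h2I).1 (by linarith)⟩
  · have : (#{σ ∈ patternsOn I | φ σ = true} : ℝ) ≤ (1 / 2 - ε) * 2 ^ #I :=
      (div_le_iff₀ h2I).1 (by linarith)
    exact ⟨false, by linarith⟩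

theorem Function.Periodic.card_filter_range_succ {β : Type*} {s : ℕ → β} {L : ℕ}
    (hper : Function.Periodic s L) (p : β → Prop) [DecidablePred p] :
    #{t ∈ range L | p (s (t + 1))} = #{t ∈ range L | p (s t)} := by
  have h := (sum_range_succ' (fun t => if p (s t) then 1 else 0) L).symm.trans
    (sum_range_succ _ L)
  simp only [card_filter]
  simp only [show s L = s 0 by simpa using hper 0] at h
  omega

theorem card_filter_orbit_eq_sum_patternsOn {g : (Fin n → Bool) → (Fin n → Bool)}
    {L : ℕ} {s : ℕ → Fin n → Bool} (hstep : ∀ t, g (s t) = s (t + 1))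
    (hper : ∀ t, s (t + L) = s t) {k : Fin n} {I : Finset (Fin n)}
    (hI : ∀ i, BoolFunDependsOn (fun x => g x k) i → i ∈ I) (b : Bool) :
    #{t ∈ range L | s t k = b}
      = ∑ σ ∈ patternsOn I with g σ k = b, #{t ∈ range L | ∀ i ∈ I, s t i = σ i} := by
  rw [← Function.Periodic.card_filter_range_succ hper (· k = b)]
  simp only [← hstep]
  exact card_filter_eq_sum_patternsOn hI (range L) s b

theorem card_patternsOn_mul_le_card_filter_orbit {g : (Fin n → Bool) → (Fin n → Bool)}
    {L : ℕ} {s : ℕ → Fin n → Bool} (hstep : ∀ t, g (s t) = s (t + 1))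
    (hper : ∀ t, s (t + L) = s t) {k : Fin n} {I : Finset (Fin n)}
    (hI : ∀ i, BoolFunDependsOn (fun x => g x k) i → i ∈ I) {c : ℝ}
    (hc : ∀ σ : Fin n → Bool, c ≤ #{t ∈ range L | ∀ i ∈ I, s t i = σ i}) (b : Bool) :
    #{σ ∈ patternsOn I | g σ k = b} * c ≤ #{t ∈ range L | s t k = b} := by
  rw [card_filter_orbit_eq_sum_patternsOn hstep hper hI b, ← nsmul_eq_mul, Nat.cast_sum]
  exact card_nsmul_le_sum _ _ _ fun σ _ => hc σ

theorem stmt7_general {n : ℕ} (g : (Fin n → Bool) → (Fin n → Bool))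
    (L : ℕ) (hL : 0 < L) (s : ℕ → Fin n → Bool)
    (hstep : ∀ t, g (s t) = s (t + 1))
    (hper : ∀ t, s (t + L) = s t)
    (k : Fin n) (I : Finset (Fin n))
    (hI : ∀ i, BoolFunDependsOn (fun x => g x k) i ↔ i ∈ I)
    (ε : ℝ)
    (hbias : |((univ.filter fun x : Fin n → Bool => g x k = true).card : ℝ) / 2 ^ n - 1 / 2| ≥ ε)
    (τ : ℝ) (hτ1 : τ < 1 / 2) :
    (∃ σ : Fin n → Bool,
        1 / 2 ^ I.card - (((range L).filter fun t => ∀ i ∈ I, s t i = σ i).card : ℝ) / L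
          ≥ τ / 2 ^ I.card) ∨
    (∃ b : Bool,
        1 / 2 - (((range L).filter fun t => s t k = b).card : ℝ) / L
          ≥ (1 - τ) * ε - τ / 2) := by
  have hdep : ∀ i, BoolFunDependsOn (fun x => g x k) i → i ∈ I := fun i => (hI i).1
  obtain ⟨b, hb⟩ := exists_card_patternsOn_ge_of_bias hdep hbias
  refine or_iff_not_imp_left.2 fun hfreq => ⟨!b, ?_⟩
  push Not at hfreq
  have hL' : (0 : ℝ) < L := by exact_mod_cast hL
  have hpattern : ∀ σ : Fin n → Bool,
      (1 - τ) / 2 ^ #I * L ≤ #{t ∈ range L | ∀ i ∈ I, s t i = σ i} := fun σ => by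
    rw [← le_div_iff₀ hL', sub_div]
    linarith [hfreq σ]
  have hcount_b : (1 / 2 + ε) * (1 - τ) * L ≤ #{t ∈ range L | s t k = b} :=
    calc (1 / 2 + ε) * (1 - τ) * L
        = (1 / 2 + ε) * 2 ^ #I * ((1 - τ) / 2 ^ #I * L) := by field_simp
      _ ≤ #{σ ∈ patternsOn I | g σ k = b} * ((1 - τ) / 2 ^ #I * L) := by
          have : 0 ≤ 1 - τ := by linarith
          gcongr
      _ ≤ _ := card_patternsOn_mul_le_card_filter_orbit hstep hper hdep hpattern b
  have hsplit : (#{t ∈ range L | s t k = b} : ℝ) + #{t ∈ range L | s t k = !b} = L := by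
    have := card_filter_add_card_filter_not (s := range L) (s · k = b)
    simp only [card_range, ← Bool.eq_not] at this
    exact_mod_cast this
  rw [ge_iff_le, le_sub_comm, div_le_iff₀ hL']
  linarith

/-- Orbit lemma: along a periodic orbit, if the regulatory function `g_k` has bias bounded
away from `1/2` by `ε`, then either some pattern `σ` on the input set `I` of `g_k` has
frequency deficiency `ζ*_I ≥ τ/2^|I|`, or `ζ*_{k} ≥ (1-τ)ε - τ/2`. -/
theorem stmt7 {n : ℕ} (g : (Fin n → Bool) → (Fin n → Bool))
    (L : ℕ) (hL : 0 < L) (s : ℕ → Fin n → Bool)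
    (hstep : ∀ t, g (s t) = s (t + 1))
    (hper : ∀ t, s (t + L) = s t)
    (hdistinct : Set.InjOn s (Finset.range L))
    (k : Fin n) (I : Finset (Fin n))
    (hI : ∀ i, BoolFunDependsOn (fun x => g x k) i ↔ i ∈ I)
    (ε : ℝ) (hε0 : 0 < ε) (hε1 : ε < 1 / 2)
    (hbias : |((univ.filter fun x : Fin n → Bool => g x k = true).card : ℝ) / 2 ^ n - 1 / 2| ≥ ε)
    (τ : ℝ) (hτ0 : 0 < τ) (hτ1 : τ < 1 / 2) :
    (∃ σ : Fin n → Bool,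
        1 / 2 ^ I.card - (((range L).filter fun t => ∀ i ∈ I, s t i = σ i).card : ℝ) / L
          ≥ τ / 2 ^ I.card) ∨
    (∃ b : Bool,
        1 / 2 - (((range L).filter fun t => s t k = b).card : ℝ) / L
          ≥ (1 - τ) * ε - τ / 2) :=
  stmt7_general g L hL s hstep hper k I hI ε hbias τ hτ1
end

section
/- Let δ > 0 and c > 2^{1−δ}. Then for all sufficiently large n, no n-dimensional Boolean system (Π, g) whose read-only part R(g) satisfies |R(g)| ≥ δn can have a periodic orbit of length ≥ c^n. -/
/-!
A variable `x` has at most one `y` with `g_x ∈ {s_y, ¬s_y}`, and every variable of a tape has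
one inside the tape, so the read-only part `R` carries a permutation `π` such that on `R` one step
of `g` is `u ↦ b ⊕ u ∘ π`. Hence the trajectory restricted to `R` has period
`2 · ord π ≤ 2 N ^ √(2N)`, `N = |R|`. A periodic orbit is injective on the pair (time modulo this
period, values outside `R`), so its length is at most `2 N ^ √(2N) · 2 ^ (n - N)`, which is
`≤ 2 n ^ √(2n) · (2 ^ (1 - δ)) ^ n = o(cⁿ)`.
-/

/-- `T` is a generalized read-only tape of the Boolean system `g`. -/
def IsTape {n : ℕ} (g : (Fin n → Bool) → (Fin n → Bool)) (T : Finset (Fin n)) : Prop :=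
  ∃ (m : ℕ) (k : ℕ → Fin n), 0 < m ∧ (∀ i, k (i + m) = k i) ∧
    Set.InjOn k (Finset.range m) ∧ T = (Finset.range m).image k ∧
    ∀ i, (∀ s, g s (k (i + 1)) = s (k i)) ∨ (∀ s, g s (k (i + 1)) = !(s (k i)))

/-- The read-only part of `g`: the union of all its generalized read-only tapes. -/
def readOnlyPart {n : ℕ} (g : (Fin n → Bool) → (Fin n → Bool)) : Set (Fin n) :=
  {x | ∃ T, IsTape g T ∧ x ∈ T}

open Finset Function Equiv Filter

theorem Finset.card_mul_card_add_one_le_two_mul_sum (s : Finset ℕ) (hs : ∀ i ∈ s, 0 < i) :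
    #s * (#s + 1) ≤ 2 * ∑ i ∈ s, i := by
  induction s using Finset.induction_on_max with
  | empty => simp
  | insert a s hlt ih =>
    have ha : a ∉ s := fun h => lt_irrefl a (hlt a h)
    have hcard : #s + 1 ≤ a := by
      have hsub : s ⊆ Ico 1 a := fun i hi => mem_Ico.2 ⟨hs i (mem_insert_of_mem hi), hlt i hi⟩
      have := card_le_card hsub
      have := hs a (mem_insert_self a s)
      simp only [Nat.card_Ico] at *
      omega
    have ih := ih fun i hi => hs i (mem_insert_of_mem hi)
    rw [card_insert_of_notMem ha, sum_insert ha]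
    nlinarith

namespace Equiv.Perm

variable {α : Type*}

-- The distinct cycle lengths of `σ` are at most `√(2N)` distinct numbers, each at most `N`.
theorem orderOf_le_card_pow_sqrt [Fintype α] [DecidableEq α] (σ : Perm α) :
    orderOf σ ≤ Fintype.card α ^ Nat.sqrt (2 * Fintype.card α) := by
  set N := Fintype.card α
  set S := σ.cycleType.toFinset
  have hS_le : ∀ i ∈ S, i ≤ N := fun i hi =>
    (le_card_support_of_mem_cycleType (Multiset.mem_toFinset.1 hi)).trans (card_le_univ _)
  have hS_pos : ∀ i ∈ S, 0 < i := fun i hi =>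
    zero_lt_two.trans_le (two_le_of_mem_cycleType (Multiset.mem_toFinset.1 hi))
  have hS_sum : ∑ i ∈ S, i ≤ N := by
    obtain ⟨u, hu⟩ := Multiset.le_iff_exists_add.1 (Multiset.dedup_le σ.cycleType)
    calc ∑ i ∈ S, i ≤ ∑ i ∈ S, i + u.sum := Nat.le_add_right _ _
      _ = σ.cycleType.sum := by
        rw [sum_eq_multiset_sum, Multiset.map_id', ← Multiset.sum_add]
        exact (congrArg Multiset.sum hu).symm
      _ ≤ N := sum_cycleType_le σ
  have hS_card : #S ≤ Nat.sqrt (2 * N) := by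
    rw [Nat.le_sqrt]
    nlinarith [S.card_mul_card_add_one_le_two_mul_sum hS_pos]
  calc orderOf σ = S.lcm id := by
        rw [← lcm_cycleType, ← Multiset.lcm_dedup, lcm_def, Multiset.map_id]; rfl
    _ ≤ ∏ i ∈ S, i := Nat.le_of_dvd (prod_pos hS_pos) (lcm_dvd_prod S id)
    _ ≤ N ^ #S := prod_le_pow_card S id N hS_le
    _ ≤ N ^ Nat.sqrt (2 * N) := by
      rcases Nat.eq_zero_or_pos N with hN | hN
      · simp_all
      · exact Nat.pow_le_pow_right hN hS_card

section shiftXor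

variable (π : Perm α) (b : α → Bool)

def shiftXor (u : α → Bool) : α → Bool :=
  fun x => xor (b x) (u (π x))

theorem iterate_shiftXor_apply (j : ℕ) (u : α → Bool) (x : α) :
    (π.shiftXor b)^[j] u x = xor ((π.shiftXor b)^[j] (fun _ => false) x) (u ((π ^ j) x)) := by
  induction j generalizing x with
  | zero => simp
  | succ j ih =>
    simp only [iterate_succ_apply', shiftXor, ih (π x), pow_succ, Perm.mul_apply,
      Bool.xor_assoc]

theorem iterate_shiftXor_two_mul {k : ℕ} (hk : π ^ k = 1) : (π.shiftXor b)^[2 * k] = id := by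
  funext u x
  rw [two_mul, iterate_add_apply, iterate_shiftXor_apply, iterate_shiftXor_apply π b k u, hk]
  simp

end shiftXor

end Equiv.Perm

theorem le_mul_card_pow_of_injOn {ι β : Type*} [Finite ι] [Finite β] (R : Set ι)
    {u : ℕ → ι → β} {P L : ℕ} (hP : 0 < P) (hper : Periodic (fun t => R.domRestrict (u t)) P)
    (hinj : Set.InjOn u (range L)) : L ≤ P * Nat.card β ^ (Nat.card ι - R.ncard) := by
  let φ : Fin L → Fin P × (↥Rᶜ → β) := fun t =>
    (⟨t % P, Nat.mod_lt _ hP⟩, Rᶜ.domRestrict (u t))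
  have hφ : Injective φ := by
    intro i j hij
    simp only [φ, Prod.mk.injEq, Fin.mk.injEq] at hij
    have hR : R.domRestrict (u i) = R.domRestrict (u j) := by
      rw [← hper.map_mod_nat i, ← hper.map_mod_nat j, hij.1]
    refine Fin.ext (hinj (by simp) (by simp) (funext fun x => ?_))
    by_cases hx : x ∈ R
    · exact congrFun hR ⟨x, hx⟩
    · exact congrFun hij.2 ⟨x, hx⟩
  simpa [Nat.card_prod, Nat.card_fun, Set.ncard_compl R] using
    Nat.card_le_card_of_injective φ hφ

section BooleanSystem

variable {ι : Type*}

-- The paper's `g_x ∈ {s_y, ¬s_y}`.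
def IsLiteral (g : (ι → Bool) → ι → Bool) (x y : ι) : Prop :=
  ∃ b : Bool, ∀ s, g s x = xor b (s y)

theorem IsLiteral.right_unique {g : (ι → Bool) → ι → Bool} {x y y' : ι}
    (h : IsLiteral g x y) (h' : IsLiteral g x y') : y = y' := by
  classical
  obtain ⟨b, hb⟩ := h
  obtain ⟨b', hb'⟩ := h'
  obtain rfl : b = b' := by simpa using (hb fun _ => false).symm.trans (hb' fun _ => false)
  by_contra hne
  have := (hb fun z => decide (z = y)).symm.trans (hb' fun z => decide (z = y))
  simp [Ne.symm hne] at this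

theorem exists_semiconj_shiftXor [Finite ι] {g : (ι → Bool) → ι → Bool} {S : Set ι}
    (hpred : ∀ x ∈ S, ∃ y ∈ S, IsLiteral g x y) (hsucc : ∀ y ∈ S, ∃ x ∈ S, IsLiteral g x y) :
    ∃ (π : Perm S) (b : S → Bool), Semiconj S.domRestrict g (π.shiftXor b) := by
  choose p hpS hp using hpred
  let p' : S → S := fun x => ⟨p x x.2, hpS x x.2⟩
  have hsurj : Surjective p' := fun y => by
    obtain ⟨x, hxS, hx⟩ := hsucc y y.2
    exact ⟨⟨x, hxS⟩, Subtype.ext ((hp x hxS).right_unique hx)⟩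
  choose b hb using fun x : S => hp x x.2
  exact ⟨Equiv.ofBijective p' ⟨Finite.injective_iff_surjective.2 hsurj, hsurj⟩, b,
    fun s => funext fun x => hb x s⟩

end BooleanSystem

section ReadOnlyPart

variable {n : ℕ} {g : (Fin n → Bool) → (Fin n → Bool)}

theorem exists_isLiteral_chain_of_mem_readOnlyPart {x : Fin n} (hx : x ∈ readOnlyPart g) :
    ∃ k : ℕ → Fin n, k 1 = x ∧ (∀ i, k i ∈ readOnlyPart g) ∧
      ∀ i, IsLiteral g (k (i + 1)) (k i) := by
  obtain ⟨T, hT, hxT⟩ := hx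
  obtain ⟨m, k, hm, hper, -, rfl, hstep⟩ := id hT
  obtain ⟨j, -, rfl⟩ := mem_image.1 hxT
  have hk : Periodic k m := hper
  -- `+ m - 1` rather than `- 1`, which would truncate at `j = 0`
  refine ⟨fun i => k (i + j + m - 1), ?_, fun i => ⟨_, hT, ?_⟩, fun i => ?_⟩
  · simpa [show 1 + j + m - 1 = j + m by omega] using hk j
  · exact mem_image.2 ⟨_, mem_range.2 (Nat.mod_lt _ hm), hk.map_mod_nat _⟩
  · have hidx : i + 1 + j + m - 1 = i + j + m - 1 + 1 := by omega
    simp only [hidx]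
    rcases hstep (i + j + m - 1) with h | h
    · exact ⟨false, by simpa using h⟩
    · exact ⟨true, by simpa using h⟩

theorem exists_semiconj_readOnlyPart (g : (Fin n → Bool) → (Fin n → Bool)) :
    ∃ (π : Perm (readOnlyPart g)) (b : readOnlyPart g → Bool),
      Semiconj (readOnlyPart g).domRestrict g (π.shiftXor b) := by
  refine exists_semiconj_shiftXor (fun x hx => ?_) (fun y hy => ?_)
  · obtain ⟨k, rfl, hkR, hk⟩ := exists_isLiteral_chain_of_mem_readOnlyPart hx
    exact ⟨k 0, hkR 0, hk 0⟩
  · obtain ⟨k, rfl, hkR, hk⟩ := exists_isLiteral_chain_of_mem_readOnlyPart hy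
    exact ⟨k 2, hkR 2, hk 1⟩

theorem le_two_mul_pow_sqrt_of_injOn_iterate (s₀ : Fin n → Bool) {L : ℕ}
    (hinj : Set.InjOn (fun t => g^[t] s₀) (range L)) :
    L ≤ 2 * (readOnlyPart g).ncard ^ Nat.sqrt (2 * (readOnlyPart g).ncard) *
      2 ^ (n - (readOnlyPart g).ncard) := by
  classical
  obtain ⟨π, b, hπ⟩ := exists_semiconj_readOnlyPart g
  have hper : Periodic (fun t => (readOnlyPart g).domRestrict (g^[t] s₀)) (2 * orderOf π) :=
    fun t => by
      simp only [(hπ.iterate_right _).eq, iterate_add_apply,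
        π.iterate_shiftXor_two_mul b (pow_orderOf_eq_one π), id]
  have hord := π.orderOf_le_card_pow_sqrt
  rw [Fintype.card_eq_nat_card, Nat.card_coe_set_eq] at hord
  calc L ≤ 2 * orderOf π * 2 ^ (n - (readOnlyPart g).ncard) := by
        simpa using le_mul_card_pow_of_injOn _ (Nat.mul_pos two_pos (orderOf_pos π)) hper hinj
    _ ≤ _ := by gcongr

end ReadOnlyPart

theorem eventually_two_mul_pow_sqrt_lt_pow {ρ : ℝ} (hρ : 1 < ρ) :
    ∀ᶠ n : ℕ in atTop, 2 * (n : ℝ) ^ Nat.sqrt (2 * n) < ρ ^ n := by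
  have hlogρ : 0 < Real.log ρ := Real.log_pos hρ
  have hlog : ∀ᶠ x : ℝ in atTop, Real.log x ≤ Real.log ρ / 4 * √x := by
    filter_upwards [(isLittleO_log_rpow_atTop one_half_pos).bound
      (by positivity : 0 < Real.log ρ / 4), eventually_ge_atTop 0] with x hx hx0
    rw [Real.norm_eq_abs, Real.norm_of_nonneg (by positivity), ← Real.sqrt_eq_rpow] at hx
    exact (le_abs_self _).trans hx
  have hlin : ∀ᶠ n : ℕ in atTop, Real.log 2 < Real.log ρ / 2 * n :=
    (tendsto_natCast_atTop_atTop.const_mul_atTop (by positivity)).eventually_gt_atTop _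
  filter_upwards [tendsto_natCast_atTop_atTop.eventually hlog, hlin, eventually_gt_atTop 0]
    with n hlog hlin hn
  have hn' : (1 : ℝ) ≤ n := by exact_mod_cast hn
  have hsqrt : (Nat.sqrt (2 * n) : ℝ) ≤ 2 * √n := by
    refine Real.nat_sqrt_le_real_sqrt.trans (Real.sqrt_le_iff.2 ⟨by positivity, ?_⟩)
    rw [mul_pow, Real.sq_sqrt (by positivity)]
    push_cast
    linarith
  rw [← Real.log_lt_log_iff (by positivity) (by positivity),
    Real.log_mul two_ne_zero (by positivity), Real.log_pow, Real.log_pow]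
  calc Real.log 2 + Nat.sqrt (2 * n) * Real.log n
      ≤ Real.log 2 + 2 * √n * (Real.log ρ / 4 * √n) := by
        gcongr
    _ = Real.log 2 + Real.log ρ / 2 * n := by
        rw [show 2 * √n * (Real.log ρ / 4 * √n) = Real.log ρ / 2 * (√n * √n) by ring,
          Real.mul_self_sqrt (by positivity)]
    _ < n * Real.log ρ := by linarith

theorem stmt14_general (δ : ℝ) (c : ℝ) (hc : c > 2 ^ ((1 : ℝ) - δ)) :
    ∀ᶠ n : ℕ in Filter.atTop, ∀ g : (Fin n → Bool) → (Fin n → Bool),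
      (Set.ncard (readOnlyPart g) : ℝ) ≥ δ * n →
      ¬ ∃ (s0 : Fin n → Bool) (L : ℕ), 0 < L ∧ g^[L] s0 = s0 ∧
          Set.InjOn (fun t => g^[t] s0) (Finset.range L) ∧ (L : ℝ) ≥ c ^ n := by
  have ha : (0 : ℝ) < 2 ^ (1 - δ) := by positivity
  filter_upwards [eventually_two_mul_pow_sqrt_lt_pow ((one_lt_div ha).2 hc), eventually_gt_atTop 0]
    with n hn hn₀ g hR
  rintro ⟨s₀, L, -, -, hinj, hL⟩
  set N := (readOnlyPart g).ncard
  have hNn : N ≤ n := by simpa using Set.ncard_le_card (readOnlyPart g)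
  have hL' : L ≤ 2 * n ^ Nat.sqrt (2 * n) * 2 ^ (n - N) := by
    refine (le_two_mul_pow_sqrt_of_injOn_iterate s₀ hinj).trans ?_
    gcongr 2 * ?_ * _
    exact (Nat.pow_le_pow_left hNn _).trans (Nat.pow_le_pow_right hn₀ (by gcongr))
  have h2 : (2 : ℝ) ^ (n - N) ≤ (2 ^ (1 - δ)) ^ n := by
    rw [← Real.rpow_natCast, ← Real.rpow_natCast, ← Real.rpow_mul zero_le_two]
    exact Real.rpow_le_rpow_of_exponent_le one_le_two (by push_cast [hNn]; linarith)
  have hlt : (L : ℝ) < c ^ n := calc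
    (L : ℝ) ≤ 2 * n ^ Nat.sqrt (2 * n) * 2 ^ (n - N) := by exact_mod_cast hL'
    _ ≤ 2 * n ^ Nat.sqrt (2 * n) * (2 ^ (1 - δ)) ^ n := by gcongr
    _ < (c / 2 ^ (1 - δ)) ^ n * (2 ^ (1 - δ)) ^ n := by gcongr
    _ = c ^ n := by rw [← mul_pow, div_mul_cancel₀ _ ha.ne']
  exact hlt.not_ge hL

/-- If the read-only part of an `n`-dimensional Boolean system has at least `δn` variables
and `c > 2^(1-δ)`, then for all large `n` the system has no periodic orbit of length `≥ cⁿ`. -/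
theorem stmt14 (δ : ℝ) (hδ : 0 < δ) (c : ℝ) (hc : c > 2 ^ ((1 : ℝ) - δ)) :
    ∀ᶠ n : ℕ in Filter.atTop, ∀ g : (Fin n → Bool) → (Fin n → Bool),
      (Set.ncard (readOnlyPart g) : ℝ) ≥ δ * n →
      ¬ ∃ (s0 : Fin n → Bool) (L : ℕ), 0 < L ∧ g^[L] s0 = s0 ∧
          Set.InjOn (fun t => g^[t] s0) (Finset.range L) ∧ (L : ℝ) ≥ c ^ n :=
  stmt14_general δ c hc
end

section
/- Suppose for every sufficiently large even n there exists an (n/2)-dimensional cooperative Boolean system, with indegree and outdegree at most 2 in its digraph, having a periodic orbit of length at least c^{2·(n/2)} = c^n where c² < 2. Then for every 0 < c < √2 and sufficiently large n there exists an n-dimensional cooperative Boolean system with indegree and outdegree at most 2, all of whose regulatory functions are strictly quadratic (of the form s_i ∧ s_j or s_i ∨ s_j with i ≠ j), having a periodic orbit of length at least c^n. -/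
/-- `φ` depends on input variable `i`. -/
def DependsOnVar {n : ℕ} (φ : (Fin n → Bool) → Bool) (i : Fin n) : Prop :=
  ∃ s r : Fin n → Bool, (∀ j, j ≠ i → s j = r j) ∧ φ s ≠ φ r

/-- `g` is cooperative: monotone for the coordinatewise order. -/
def Cooperative {n : ℕ} (g : (Fin n → Bool) → (Fin n → Bool)) : Prop :=
  ∀ s r : Fin n → Bool, (∀ i, s i ≤ r i) → ∀ i, g s i ≤ g r i

/-- Every indegree of the digraph of `g` is at most `d`. -/
def IndegLE {n : ℕ} (g : (Fin n → Bool) → (Fin n → Bool)) (d : ℕ) : Prop :=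
  ∀ k, Set.ncard {i | DependsOnVar (fun x => g x k) i} ≤ d

/-- Every outdegree of the digraph of `g` is at most `d`. -/
def OutdegLE {n : ℕ} (g : (Fin n → Bool) → (Fin n → Bool)) (d : ℕ) : Prop :=
  ∀ i, Set.ncard {k | DependsOnVar (fun x => g x k) i} ≤ d

/-- `g` has a periodic orbit of length at least `ℓ`. -/
def HasOrbitOfLength {n : ℕ} (g : (Fin n → Bool) → (Fin n → Bool)) (ℓ : ℝ) : Prop :=
  ∃ (s0 : Fin n → Bool) (L : ℕ), 0 < L ∧ g^[L] s0 = s0 ∧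
    Set.InjOn (fun t => g^[t] s0) (Finset.range L) ∧ (L : ℝ) ≥ ℓ

/-!
Put `m = (n - 2) / 2` and take a bi-quadratic cooperative system `f` on `m` nodes with an orbit
of length at least `(c'²)^m`, where `max c 1 < c' < √2`; for large `n` this beats `cⁿ`.
By monotonicity every regulatory function of `f` is `s_a ∧ s_b` or `s_a ∨ s_b` with `a ≠ b`, a
single variable `s_a`, or a constant `b`. Keep the `m` nodes of `f`, add a helper node `h` for
each coordinate of the last two kinds, and fill up to `n` nodes with a cycle `t_j = t_j ∨ t_{j+1}`
that stays `true`. The variable `s_a` becomes `s_a ∧ h` with `h` frozen at `true`, the constant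
`b` becomes `h ∨ w` or `h ∧ w` with `h` frozen at `b`; a helper frozen at `true` computes `h ∨ w`,
one frozen at `false` computes `h ∧ w`. By double counting the free inputs `w` are exactly as many
as the arcs missing from the outdegrees of `f`, so they can be drawn from the nodes of `f` keeping
every outdegree at most 2. The new system is strictly quadratic and contains a copy of `f`, hence
of its orbit.
-/

open Function Finset Filter

namespace BooleanNetwork

variable {ι κ : Type*}

structure Gate (ι : Type*) where
  conj : Bool
  left : ι
  right : ι

namespace Gate

def eval (g : Gate ι) (s : ι → Bool) : Bool :=
  if g.conj then s g.left && s g.right else s g.left || s g.right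

def map (e : ι → κ) (g : Gate ι) : Gate κ := ⟨g.conj, e g.left, e g.right⟩

@[simp] lemma eval_map (e : ι → κ) (g : Gate ι) (s : κ → Bool) :
    (g.map e).eval s = g.eval (s ∘ e) := rfl

lemma eval_mono (g : Gate ι) {s r : ι → Bool} (h : s ≤ r) : g.eval s ≤ g.eval r := by
  have hl := h g.left
  have hr := h g.right
  unfold eval
  split
  · simp only [Bool.le_iff_imp, Bool.and_eq_true] at *; tauto
  · simp only [Bool.le_iff_imp, Bool.or_eq_true] at *; tauto

lemma eval_congr (g : Gate ι) {s r : ι → Bool} (hl : s g.left = r g.left)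
    (hr : s g.right = r g.right) : g.eval s = g.eval r := by
  simp [eval, hl, hr]

lemma eval_absorb {x y : ι} {s : ι → Bool} {v : Bool} (hx : s x = v) :
    (⟨!v, x, y⟩ : Gate ι).eval s = v := by
  cases v <;> simp [eval, hx]

end Gate

def network (G : ι → Gate ι) (s : ι → Bool) : ι → Bool := fun k => (G k).eval s

def Proper (G : ι → Gate ι) : Prop := ∀ k, (G k).left ≠ (G k).right

def FanOutLE (G : ι → Gate ι) (d : ℕ) : Prop :=
  ∀ i, ∃ S : Finset ι, #S ≤ d ∧ ∀ k, (G k).left = i ∨ (G k).right = i → k ∈ S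

def reindex (e : ι ≃ κ) (G : ι → Gate ι) : κ → Gate κ := fun k => (G (e.symm k)).map e

lemma semiconj_network_reindex (e : ι ≃ κ) (G : ι → Gate ι) :
    Semiconj (· ∘ e.symm) (network G) (network (reindex e G)) := fun s => by
  funext k
  simp [network, reindex, comp_def]

lemma Proper.reindex {G : ι → Gate ι} (hG : Proper G) (e : ι ≃ κ) : Proper (reindex e G) :=
  fun k => e.injective.ne (hG (e.symm k))

lemma FanOutLE.reindex {G : ι → Gate ι} {d : ℕ} (hG : FanOutLE G d) (e : ι ≃ κ) :
    FanOutLE (reindex e G) d := by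
  intro i
  obtain ⟨S, hS, hread⟩ := hG (e.symm i)
  refine ⟨S.map e.toEmbedding, by simpa using hS, fun k hk => ?_⟩
  have : e.symm k ∈ S := hread _ (by simpa [BooleanNetwork.reindex, Gate.map, e.eq_symm_apply] using hk)
  simpa [Finset.mem_map_equiv] using this

section FinNetwork

variable {n : ℕ} (G : Fin n → Gate (Fin n))

def StrictlyQuadratic (g : (Fin n → Bool) → (Fin n → Bool)) : Prop :=
  ∀ k, ∃ i j : Fin n, i ≠ j ∧ ((∀ s, g s k = (s i && s j)) ∨ (∀ s, g s k = (s i || s j)))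

lemma cooperative_network : Cooperative (network G) :=
  fun _ _ h k => (G k).eval_mono h

lemma eq_of_dependsOnVar_network {k i : Fin n} (h : DependsOnVar (fun s => network G s k) i) :
    (G k).left = i ∨ (G k).right = i := by
  by_contra! hne
  obtain ⟨s, r, hsr, hne'⟩ := h
  exact hne' ((G k).eval_congr (hsr _ hne.1) (hsr _ hne.2))

lemma indegLE_network : IndegLE (network G) 2 := by
  intro k
  calc Set.ncard {i | DependsOnVar (fun x => network G x k) i}
      ≤ Set.ncard ({(G k).left, (G k).right} : Set (Fin n)) :=
        Set.ncard_le_ncard (fun i hi => by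
          rcases eq_of_dependsOnVar_network G hi with h | h <;> simp [h])
    _ ≤ 2 := (Set.ncard_insert_le _ _).trans (by simp)

lemma outdegLE_network (hG : FanOutLE G 2) : OutdegLE (network G) 2 := by
  intro i
  obtain ⟨S, hS, hread⟩ := hG i
  calc Set.ncard {k | DependsOnVar (fun x => network G x k) i}
      ≤ Set.ncard (S : Set (Fin n)) :=
        Set.ncard_le_ncard fun k hk => hread k (eq_of_dependsOnVar_network G hk)
    _ ≤ 2 := by rwa [Set.ncard_coe_finset]

lemma strictlyQuadratic_network (hG : Proper G) : StrictlyQuadratic (network G) := by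
  intro k
  refine ⟨(G k).left, (G k).right, hG k, ?_⟩
  cases h : (G k).conj
  · exact Or.inr fun s => by simp [network, Gate.eval, h]
  · exact Or.inl fun s => by simp [network, Gate.eval, h]

end FinNetwork

variable {m : ℕ}

lemma dependsOn_setOf_dependsOnVar (φ : (Fin m → Bool) → Bool) :
    DependsOn φ {i | DependsOnVar φ i} := by
  intro s r hsr
  suffices ∀ T : Finset (Fin m), ∀ s : Fin m → Bool, (∀ i, DependsOnVar φ i → s i = r i) →
      (∀ i ∉ T, s i = r i) → φ s = φ r from this univ s hsr (by simp)
  intro T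
  induction T using Finset.induction_on with
  | empty => exact fun s _ hT => congrArg φ (funext fun i => hT i (notMem_empty i))
  | insert a T _ ih =>
    intro s hdep hT
    have hupd : φ (update s a (r a)) = φ r := by
      refine ih _ (fun i hi => ?_) (fun i hi => ?_) <;> rw [update_apply] <;> split_ifs with hia
      · exact hia ▸ rfl
      · exact hdep i hi
      · exact hia ▸ rfl
      · exact hT i (by simp [hia, hi])
    rw [← hupd]
    by_contra hne
    have hsa : s a = r a := hdep a ⟨s, update s a (r a), fun j hj => (update_of_ne hj _ _).symm, hne⟩
    exact hne (by rw [← hsa, update_eq_self])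

lemma bool_fun_eq_id_of_monotone : ∀ F : Bool → Bool, (∀ x y, x ≤ y → F x ≤ F y) →
    (∃ x y, F x ≠ F y) → ∀ x, F x = x := by
  decide

lemma bool_fun₂_eq_gate_of_monotone : ∀ F : Bool → Bool → Bool,
    (∀ x x' y y', x ≤ x' → y ≤ y' → F x y ≤ F x' y') →
    (∃ x x' y, F x y ≠ F x' y) → (∃ x y y', F x y ≠ F x y') →
    ∃ c : Bool, ∀ x y, F x y = if c then x && y else x || y := by
  decide

inductive RegForm (m : ℕ)
  | quad (g : Gate (Fin m)) (hg : g.left ≠ g.right)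
  | var (a : Fin m)
  | const (b : Bool)

namespace RegForm

def eval : RegForm m → (Fin m → Bool) → Bool
  | quad g _ => g.eval
  | var a => fun u => u a
  | const b => fun _ => b

def support : RegForm m → Finset (Fin m)
  | quad g _ => {g.left, g.right}
  | var a => {a}
  | const _ => ∅

def isQuad : RegForm m → Bool
  | quad .. => true
  | _ => false

def isConst : RegForm m → Bool
  | const _ => true
  | _ => false

def helperValue : RegForm m → Bool
  | const b => b
  | _ => true

lemma card_support_add (r : RegForm m) :
    (if r.isQuad = false then 1 else 0) + (if r.isConst = true then 1 else 0) + #r.support = 2 := by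
  cases r with
  | quad g hg => simp [isQuad, isConst, support, card_pair hg]
  | var a => simp [isQuad, isConst, support]
  | const b => simp [isQuad, isConst, support]

end RegForm

lemma exists_regForm (φ : (Fin m → Bool) → Bool) (hmono : Monotone φ)
    (hcard : {i | DependsOnVar φ i}.ncard ≤ 2) :
    ∃ r : RegForm m, φ = r.eval ∧ ∀ i, i ∈ r.support ↔ DependsOnVar φ i := by
  have hdep := dependsOn_setOf_dependsOnVar φ
  obtain h0 | h1 | h2 : {i | DependsOnVar φ i}.ncard = 0 ∨ {i | DependsOnVar φ i}.ncard = 1 ∨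
      {i | DependsOnVar φ i}.ncard = 2 := by omega
  · rw [Set.ncard_eq_zero] at h0
    refine ⟨.const (φ fun _ => false), funext fun u => hdep (by simp [h0]), fun i => ?_⟩
    simpa [RegForm.support] using Set.ext_iff.mp h0 i
  · obtain ⟨a, ha⟩ := Set.ncard_eq_one.mp h1
    have hmem : ∀ i, DependsOnVar φ i ↔ i = a := fun i => by simpa using Set.ext_iff.mp ha i
    have hrep : ∀ u, φ u = φ fun _ => u a := fun u => hdep fun i hi => by simp [(hmem i).mp hi]
    have hid := bool_fun_eq_id_of_monotone (fun x => φ fun _ => x)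
      (fun x y hxy => hmono fun _ => hxy) (by
        obtain ⟨s, r, -, hne⟩ := (hmem a).mpr rfl
        rw [hrep s, hrep r] at hne
        exact ⟨s a, r a, hne⟩)
    exact ⟨.var a, funext fun u => (hrep u).trans (hid _), fun i => by simp [RegForm.support, hmem]⟩
  · obtain ⟨a, b, hab, hD⟩ := Set.ncard_eq_two.mp h2
    have hmem : ∀ i, DependsOnVar φ i ↔ i = a ∨ i = b := fun i => by
      simpa using Set.ext_iff.mp hD i
    set φ₂ : Bool → Bool → Bool := fun x y => φ fun i => if i = a then x else y
    have hrep : ∀ u, φ u = φ₂ (u a) (u b) := fun u =>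
      hdep fun i hi => by rcases (hmem i).mp hi with rfl | rfl <;> simp [Ne.symm hab]
    obtain ⟨c, hc⟩ := bool_fun₂_eq_gate_of_monotone φ₂
      (fun x x' y y' hx hy => hmono fun i => by dsimp only; split_ifs <;> assumption)
      (by
        obtain ⟨s, r, hsr, hne⟩ := (hmem a).mpr (Or.inl rfl)
        rw [hrep s, hrep r, hsr b (Ne.symm hab)] at hne
        exact ⟨s a, r a, r b, hne⟩)
      (by
        obtain ⟨s, r, hsr, hne⟩ := (hmem b).mpr (Or.inr rfl)
        rw [hrep s, hrep r, hsr a hab] at hne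
        exact ⟨r a, s b, r b, hne⟩)
    refine ⟨.quad ⟨c, a, b⟩ hab, funext fun u => by simp [hrep u, hc, RegForm.eval, Gate.eval],
      fun i => by simp [RegForm.support, hmem]⟩

lemma exists_card_fiber_eq {α β : Type*} [Fintype α] [Fintype β] [DecidableEq β] (d : β → ℕ)
    (h : Fintype.card α = ∑ b, d b) : ∃ f : α → β, ∀ b, #{a | f a = b} = d b := by
  obtain ⟨Φ⟩ : Nonempty (α ≃ Σ b, Fin (d b)) := Fintype.card_eq.mp (by simpa using h)
  refine ⟨fun a => (Φ a).1, fun b => ?_⟩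
  rw [← Fintype.card_subtype]
  simpa using Fintype.card_congr ((Φ.subtypeEquiv fun _ => Iff.rfl).trans (Equiv.sigmaSubtype b))

lemma finRotate_apply_ne {p : ℕ} (hp : 2 ≤ p) (j : Fin p) : finRotate p j ≠ j :=
  Equiv.Perm.mem_support.mp (by simp [support_finRotate_of_le hp])

namespace Extension

variable (F : Fin m → RegForm m)

abbrev Helper := {k : Fin m // (F k).isQuad = false}

-- The gate inputs not prescribed by `F`: the right input of every helper and of every
-- constant coordinate.
abbrev FreeSlot := Helper F ⊕ {k : Fin m // (F k).isConst = true}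

def users (i : Fin m) : Finset (Fin m) := {k | i ∈ (F k).support}

lemma mem_users {i k : Fin m} : k ∈ users F i ↔ i ∈ (F k).support := by simp [users]

lemma card_freeSlot (husers : ∀ i, #(users F i) ≤ 2) :
    Fintype.card (FreeSlot F) = ∑ i, (2 - #(users F i)) := by
  have hslots : Fintype.card (FreeSlot F) + ∑ k, #(F k).support = 2 * m := by
    simp only [Fintype.card_sum, Fintype.card_subtype, card_filter, ← sum_add_distrib,
      RegForm.card_support_add]
    simp [mul_comm]
  have hdouble : ∑ k, #(F k).support = ∑ i, #(users F i) := by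
    simpa [bipartiteAbove, bipartiteBelow, users, filter_mem_eq_inter] using
      sum_card_bipartiteAbove_eq_sum_card_bipartiteBelow (s := univ) (t := univ)
        (fun k i => i ∈ (F k).support)
  have hdefect : ∑ i, (2 - #(users F i)) + ∑ i, #(users F i) = 2 * m := by
    simp [← sum_add_distrib, Nat.sub_add_cancel (husers _), mul_comm]
  omega

variable (fill : FreeSlot F → Fin m) (p : ℕ)

abbrev Node := Fin m ⊕ Helper F ⊕ Fin p

def mainGate (k : Fin m) : Gate (Node F p) :=
  match h : F k with
  | .quad g _ => g.map .inl
  | .var a => ⟨true, .inl a, .inr (.inl ⟨k, by simp [h, RegForm.isQuad]⟩)⟩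
  | .const b => ⟨!b, .inr (.inl ⟨k, by simp [h, RegForm.isQuad]⟩),
      .inl (fill (.inr ⟨k, by simp [h, RegForm.isConst]⟩))⟩

def gates : Node F p → Gate (Node F p)
  | .inl k => mainGate F fill p k
  | .inr (.inl h) => ⟨!(F h).helperValue, .inr (.inl h), .inl (fill (.inl h))⟩
  | .inr (.inr j) => ⟨false, .inr (.inr j), .inr (.inr (finRotate p j))⟩

def state (u : Fin m → Bool) : Node F p → Bool
  | .inl k => u k
  | .inr (.inl h) => (F h).helperValue
  | .inr (.inr _) => true

def slotOwner : FreeSlot F → Node F p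
  | .inl h => .inr (.inl h)
  | .inr k => .inl k

variable {F p}

lemma mainGate_quad {k : Fin m} {g : Gate (Fin m)} {hg : g.left ≠ g.right}
    (hF : F k = .quad g hg) : mainGate F fill p k = g.map .inl := by
  unfold mainGate
  split <;> rename_i h <;> rw [hF] at h <;> cases h
  rfl

lemma mainGate_var {k a : Fin m} (hF : F k = .var a) :
    mainGate F fill p k = ⟨true, .inl a, .inr (.inl ⟨k, by simp [hF, RegForm.isQuad]⟩)⟩ := by
  unfold mainGate
  split <;> rename_i h <;> rw [hF] at h <;> cases h
  rfl

lemma mainGate_const {k : Fin m} {b : Bool} (hF : F k = .const b) :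
    mainGate F fill p k = ⟨!b, .inr (.inl ⟨k, by simp [hF, RegForm.isQuad]⟩),
      .inl (fill (.inr ⟨k, by simp [hF, RegForm.isConst]⟩))⟩ := by
  unfold mainGate
  split <;> rename_i h <;> rw [hF] at h <;> cases h
  rfl

variable (F p)

lemma semiconj_state :
    Semiconj (state F p) (fun u k => (F k).eval u) (network (gates F fill p)) := by
  intro u
  funext κ
  rcases κ with k | h | j
  · show (F k).eval u = (mainGate F fill p k).eval (state F p u)
    cases hF : F k with
    | quad g hg => rw [mainGate_quad fill hF]; rfl
    | var a => simp [mainGate_var fill hF, RegForm.eval, Gate.eval, state, hF, RegForm.helperValue]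
    | const b =>
      rw [mainGate_const fill hF]
      exact (Gate.eval_absorb (by simp [state, hF, RegForm.helperValue, RegForm.eval])).symm
  · exact (Gate.eval_absorb (x := .inr (.inl h)) (s := state F p u) rfl).symm
  · simp [network, gates, state, Gate.eval]

lemma proper_gates (hp : 2 ≤ p) : Proper (gates F fill p) := by
  rintro (k | h | j)
  · cases hF : F k with
    | quad g hg => simpa [gates, mainGate_quad fill hF, Gate.map] using hg
    | var a => simp [gates, mainGate_var fill hF]
    | const b => simp [gates, mainGate_const fill hF]
  · simp [gates]
  · simpa [gates] using (finRotate_apply_ne hp j).symm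

lemma mem_readers_main {i : Fin m} {κ : Node F p}
    (hκ : (gates F fill p κ).left = .inl i ∨ (gates F fill p κ).right = .inl i) :
    κ ∈ (users F i).map .inl ∪ ({s | fill s = i} : Finset (FreeSlot F)).image (slotOwner F p) := by
  rcases κ with k | h | j
  · cases hF : F k with
    | quad g hg =>
      simp only [gates, mainGate_quad fill hF, Gate.map, Sum.inl.injEq] at hκ
      refine mem_union_left _ (mem_map_of_mem _ ?_)
      rw [mem_users, hF]
      rcases hκ with rfl | rfl <;> simp [RegForm.support]
    | var a =>
      simp only [gates, mainGate_var fill hF, reduceCtorEq, Sum.inl.injEq, or_false] at hκ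
      exact mem_union_left _ (mem_map_of_mem _ (by simp [mem_users, hF, RegForm.support, hκ]))
    | const b =>
      simp only [gates, mainGate_const fill hF, reduceCtorEq, Sum.inl.injEq, false_or] at hκ
      exact mem_union_right _
        (mem_image.mpr ⟨.inr ⟨k, by simp [hF, RegForm.isConst]⟩, by simp [hκ], rfl⟩)
  · simp only [gates, reduceCtorEq, Sum.inl.injEq, false_or] at hκ
    exact mem_union_right _ (mem_image.mpr ⟨.inl h, by simp [hκ], rfl⟩)
  · simp [gates] at hκ

lemma mem_readers_helper {h : Helper F} {κ : Node F p}
    (hκ : (gates F fill p κ).left = .inr (.inl h) ∨ (gates F fill p κ).right = .inr (.inl h)) :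
    κ ∈ ({.inl h.1, .inr (.inl h)} : Finset (Node F p)) := by
  rcases κ with k | h' | j
  · cases hF : F k with
    | quad g hg => simp [gates, mainGate_quad fill hF, Gate.map] at hκ
    | var a => simp_all [gates, mainGate_var fill hF, Subtype.ext_iff]
    | const b => simp_all [gates, mainGate_const fill hF, Subtype.ext_iff]
  · simp_all [gates]
  · simp [gates] at hκ

lemma mem_readers_pad {j : Fin p} {κ : Node F p}
    (hκ : (gates F fill p κ).left = .inr (.inr j) ∨ (gates F fill p κ).right = .inr (.inr j)) :
    κ ∈ ({.inr (.inr j), .inr (.inr ((finRotate p).symm j))} : Finset (Node F p)) := by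
  rcases κ with k | h | j'
  · cases hF : F k with
    | quad g hg => simp [gates, mainGate_quad fill hF, Gate.map] at hκ
    | var a => simp [gates, mainGate_var fill hF] at hκ
    | const b => simp [gates, mainGate_const fill hF] at hκ
  · simp [gates] at hκ
  · simp only [gates, Sum.inr.injEq] at hκ
    rcases hκ with rfl | rfl <;>
      simp only [mem_insert, mem_singleton, Equiv.symm_apply_apply, true_or, or_true]

lemma fanOutLE_gates (husers : ∀ i, #(users F i) ≤ 2)
    (hfill : ∀ i, #{s | fill s = i} = 2 - #(users F i)) : FanOutLE (gates F fill p) 2 := by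
  rintro (i | h | j)
  · refine ⟨_, ?_, fun κ => mem_readers_main F fill p⟩
    calc _ ≤ #((users F i).map .inl) + #(({s | fill s = i} : Finset _).image (slotOwner F p)) :=
          card_union_le _ _
      _ ≤ #(users F i) + (2 - #(users F i)) := by grw [card_map, card_image_le, hfill]
      _ = 2 := by have := husers i; omega
  · exact ⟨_, card_le_two, fun κ => mem_readers_helper F fill p⟩
  · exact ⟨_, card_le_two, fun κ => mem_readers_pad F fill p⟩

end Extension

open Extension in
theorem exists_strictlyQuadratic_semiconj {m n : ℕ} (hn : 2 * m + 2 ≤ n)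
    {f : (Fin m → Bool) → (Fin m → Bool)} (hcoop : Cooperative f) (hin : IndegLE f 2)
    (hout : OutdegLE f 2) :
    ∃ (g : (Fin n → Bool) → (Fin n → Bool)) (E : (Fin m → Bool) → (Fin n → Bool)),
      Cooperative g ∧ IndegLE g 2 ∧ OutdegLE g 2 ∧ StrictlyQuadratic g ∧
      Injective E ∧ Semiconj E f g := by
  choose F hFeval hFsupp using fun k =>
    exists_regForm (fun u => f u k) (fun u v h => hcoop u v h k) (hin k)
  have husers : ∀ i, #(users F i) ≤ 2 := fun i => by
    have : (users F i : Set (Fin m)) = {k | DependsOnVar (fun x => f x k) i} := by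
      ext k; simp [mem_users, hFsupp]
    rw [← Set.ncard_coe_finset, this]
    exact hout i
  obtain ⟨fill, hfill⟩ := exists_card_fiber_eq _ (card_freeSlot F husers)
  set p := n - m - Fintype.card (Helper F)
  have hH : Fintype.card (Helper F) ≤ m := by
    simpa using Fintype.card_subtype_le fun k => (F k).isQuad = false
  have hp : 2 ≤ p := by omega
  let e : Node F p ≃ Fin n := Fintype.equivFinOfCardEq (by simp [p]; omega)
  let G := reindex e (gates F fill p)
  have hf : f = fun u k => (F k).eval u := funext fun u => funext fun k => congrFun (hFeval k) u
  refine ⟨network G, (· ∘ e.symm) ∘ state F p, cooperative_network G, indegLE_network G,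
    outdegLE_network G ((fanOutLE_gates F fill p husers hfill).reindex e),
    strictlyQuadratic_network G ((proper_gates F fill p hp).reindex e), fun u v huv => ?_,
    hf ▸ (semiconj_network_reindex e _).comp_left (semiconj_state F fill p)⟩
  funext k
  simpa [state] using congrFun huv (e (.inl k))

end BooleanNetwork

open BooleanNetwork

lemma HasOrbitOfLength.of_semiconj {m n : ℕ} {f : (Fin m → Bool) → (Fin m → Bool)}
    {g : (Fin n → Bool) → (Fin n → Bool)} {E : (Fin m → Bool) → (Fin n → Bool)}
    (hE : Injective E) (hfg : Semiconj E f g) {ℓ : ℝ} (hf : HasOrbitOfLength f ℓ) :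
    HasOrbitOfLength g ℓ := by
  obtain ⟨s₀, L, hL, hper, hinj, hlen⟩ := hf
  have hiter : ∀ t, g^[t] (E s₀) = E (f^[t] s₀) := fun t => ((hfg.iterate_right t) s₀).symm
  refine ⟨E s₀, L, hL, by rw [hiter, hper], ?_, hlen⟩
  simpa only [hiter, comp_def] using hE.comp_injOn hinj

lemma HasOrbitOfLength.mono {n : ℕ} {g : (Fin n → Bool) → (Fin n → Bool)} {ℓ ℓ' : ℝ}
    (hg : HasOrbitOfLength g ℓ) (h : ℓ' ≤ ℓ) : HasOrbitOfLength g ℓ' := by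
  obtain ⟨s₀, L, hL, hper, hinj, hlen⟩ := hg
  exact ⟨s₀, L, hL, hper, hinj, h.trans hlen⟩

lemma eventually_pow_le_sq_pow_half {c c' : ℝ} (hc : 0 ≤ c) (hcc' : c < c') (hc' : 1 ≤ c') :
    ∀ᶠ n : ℕ in atTop, c ^ n ≤ (c' ^ 2) ^ ((n - 2) / 2) := by
  -- `2 * ((n - 2) / 2) ≥ n - 3`: the little-o bound pays for the lost factor `c' ^ 3`.
  have hc'3 : 0 < c' ^ 3 := by positivity
  filter_upwards [(isLittleO_pow_pow_of_lt_left hc hcc').bound (inv_pos.mpr hc'3)] with n hn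
  rw [Real.norm_of_nonneg (by positivity), Real.norm_of_nonneg (by positivity)] at hn
  calc c ^ n ≤ (c' ^ 3)⁻¹ * c' ^ n := hn
    _ ≤ (c' ^ 3)⁻¹ * c' ^ (2 * ((n - 2) / 2) + 3) := by gcongr; omega
    _ = (c' ^ 2) ^ ((n - 2) / 2) := by rw [pow_add, pow_mul]; field_simp

/-- If for every `c` with `c² < 2` and every sufficiently large `m` there is an
`m`-dimensional bi-quadratic cooperative system with a periodic orbit of length at least
`(c²)^m = c^(2m)`, then for every `0 < c < √2` and sufficiently large `n` there is an
`n`-dimensional bi-quadratic cooperative system, all of whose regulatory functions are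
strictly quadratic, with a periodic orbit of length at least `cⁿ`. -/
theorem stmt16
    (H : ∀ c : ℝ, 0 < c → c ^ 2 < 2 → ∀ᶠ m : ℕ in Filter.atTop,
      ∃ f : (Fin m → Bool) → (Fin m → Bool),
        Cooperative f ∧ IndegLE f 2 ∧ OutdegLE f 2 ∧ HasOrbitOfLength f ((c ^ 2) ^ m)) :
    ∀ c : ℝ, 0 < c → c < Real.sqrt 2 → ∀ᶠ n : ℕ in Filter.atTop,
      ∃ g : (Fin n → Bool) → (Fin n → Bool),
        Cooperative g ∧ IndegLE g 2 ∧ OutdegLE g 2 ∧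
        (∀ k, ∃ i j : Fin n, i ≠ j ∧
          ((∀ s, g s k = (s i && s j)) ∨ (∀ s, g s k = (s i || s j)))) ∧
        HasOrbitOfLength g (c ^ n) := by
  intro c hc hc2
  obtain ⟨c', hcc', hc'2⟩ := exists_between (max_lt hc2 Real.one_lt_sqrt_two)
  have hc'pos : 0 < c' := hc.trans_le ((le_max_left _ _).trans hcc'.le)
  have hsq : c' ^ 2 < 2 := (Real.lt_sqrt hc'pos.le).mp hc'2
  have hhalf : Tendsto (fun n : ℕ => (n - 2) / 2) atTop atTop :=
    (Nat.tendsto_div_const_atTop two_ne_zero).comp (tendsto_sub_atTop_nat 2)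
  filter_upwards [hhalf.eventually (H c' hc'pos hsq), eventually_ge_atTop 2,
    eventually_pow_le_sq_pow_half hc.le ((le_max_left _ _).trans_lt hcc')
      ((le_max_right _ _).trans hcc'.le)] with n ⟨f, hcoop, hin, hout, horbit⟩ hn hpow
  obtain ⟨g, E, hgcoop, hgin, hgout, hquad, hE, hfg⟩ :=
    exists_strictlyQuadratic_semiconj (by omega : 2 * ((n - 2) / 2) + 2 ≤ n) hcoop hin hout
  exact ⟨g, hgcoop, hgin, hgout, hquad, (horbit.of_semiconj hE hfg).mono hpow⟩
end

section
/- Let (Σ, f) be an (n−2)-dimensional cooperative Boolean system with outdegrees at most 2 and a periodic orbit of length L containing state s. Define an n-dimensional system (Π, g) by: g_k = f_k if k ≤ n−2 and f_k is strictly quadratic; g_k = s_{i_k} ∧ s_n if k ≤ n−2 and f_k = s_{i_k} is monic; and g_{n−1} = g_n = s_{n−1} ∧ s_n. Then (Π, g) is cooperative, every regulatory function of g is strictly quadratic (depends on exactly two variables), every indegree is at most 2, and the state s* = (s_1, …, s_{n−2}, 1, 1) lies on a periodic orbit of (Π, g) of length exactly L. -/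
/-- `φ` depends on input variable `i`. -/
def BoolDependsOn {n : ℕ} (φ : (Fin n → Bool) → Bool) (i : Fin n) : Prop :=
  ∃ s r : Fin n → Bool, (∀ j, j ≠ i → s j = r j) ∧ φ s ≠ φ r

/-- `φ` is strictly quadratic: it depends on exactly two (distinct) variables. -/
def StrictlyQuadratic {n : ℕ} (φ : (Fin n → Bool) → Bool) : Prop :=
  ∃ i j : Fin n, i ≠ j ∧ BoolDependsOn φ i ∧ BoolDependsOn φ j ∧
    ∀ l, BoolDependsOn φ l → l = i ∨ l = j

/-! Once the two extra coordinates are `1` they stay `1`, since each of them is updated by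
`s_{m+1} ∧ s_{m+2}`; and a monic update `s_i` then agrees with `s_i ∧ s_{m+2}`. Hence padding a
state with `1, 1` conjugates `f` to `g`, and, padding being injective, it carries the periodic
orbit of `s` onto one of `g` of the same length. Every regulatory function of `g` is either a
strictly quadratic `f_k` read on the first `m` coordinates or a conjunction of two distinct
variables, so it is monotone and depends on exactly two variables. -/

structure IsPaddedSystem {m : ℕ} (f : (Fin m → Bool) → (Fin m → Bool))
    (g : (Fin (m + 2) → Bool) → (Fin (m + 2) → Bool)) : Prop where
  castAdd : ∀ k : Fin m,
    (StrictlyQuadratic (fun x => f x k) ∧ ∀ x, g x (Fin.castAdd 2 k) = f (x ∘ Fin.castAdd 2) k) ∨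
    (∃ i : Fin m, (∀ x, f x k = x i) ∧
      ∀ x, g x (Fin.castAdd 2 k) = (x (Fin.castAdd 2 i) && x (Fin.last (m + 1))))
  castSucc_last : ∀ x,
    g x (Fin.castSucc (Fin.last m)) = (x (Fin.castSucc (Fin.last m)) && x (Fin.last (m + 1)))
  last : ∀ x, g x (Fin.last (m + 1)) = (x (Fin.castSucc (Fin.last m)) && x (Fin.last (m + 1)))

section Dependence

variable {n : ℕ}

theorem boolDependsOn_and_left {a b : Fin n} (hab : a ≠ b) :
    BoolDependsOn (fun x => x a && x b) a :=
  ⟨fun _ => true, fun j => !decide (j = a), fun j hj => by simp [hj], by simp [hab.symm]⟩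

theorem boolDependsOn_and_right {a b : Fin n} (hab : a ≠ b) :
    BoolDependsOn (fun x => x a && x b) b :=
  ⟨fun _ => true, fun j => !decide (j = b), fun j hj => by simp [hj], by simp [hab]⟩

theorem not_boolDependsOn_and {a b l : Fin n} (hla : l ≠ a) (hlb : l ≠ b) :
    ¬ BoolDependsOn (fun x => x a && x b) l := by
  rintro ⟨s, r, hsr, hne⟩
  exact hne (by simp only [hsr a hla.symm, hsr b hlb.symm])

theorem strictlyQuadratic_and {a b : Fin n} (hab : a ≠ b) :
    StrictlyQuadratic (fun x => x a && x b) := by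
  refine ⟨a, b, hab, boolDependsOn_and_left hab, boolDependsOn_and_right hab, fun l hl => ?_⟩
  by_contra! h
  exact not_boolDependsOn_and h.1 h.2 hl

theorem StrictlyQuadratic.ncard_boolDependsOn_le_two {φ : (Fin n → Bool) → Bool}
    (h : StrictlyQuadratic φ) : Set.ncard {i | BoolDependsOn φ i} ≤ 2 := by
  obtain ⟨i, j, hij, -, -, hmax⟩ := h
  have hsub : {l | BoolDependsOn φ l} ⊆ {i, j} := fun l hl => hmax l hl
  exact (Set.ncard_le_ncard hsub).trans (Set.ncard_pair hij).le

theorem boolDependsOn_comp_iff {m : ℕ} {e : Fin m → Fin n} (he : e.Injective)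
    (φ : (Fin m → Bool) → Bool) (l : Fin n) :
    BoolDependsOn (fun x => φ (x ∘ e)) l ↔ ∃ i, e i = l ∧ BoolDependsOn φ i := by
  constructor
  · rintro ⟨s, r, hsr, hne⟩
    by_cases hl : ∃ i, e i = l
    · obtain ⟨i, rfl⟩ := hl
      exact ⟨i, rfl, s ∘ e, r ∘ e, fun j hj => hsr (e j) (he.ne hj), hne⟩
    · refine absurd (congrArg φ (funext fun j => hsr (e j) ?_)) hne
      rintro rfl
      exact hl ⟨j, rfl⟩
  · rintro ⟨i, rfl, s, r, hsr, hne⟩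
    let pad (u : Fin m → Bool) : Fin n → Bool := Function.extend e u fun _ => true
    have hpad (u : Fin m → Bool) : pad u ∘ e = u := funext (he.extend_apply u fun _ => true)
    refine ⟨pad s, pad r, fun j hj => ?_, by simpa only [hpad] using hne⟩
    by_cases hj' : ∃ k, e k = j
    · obtain ⟨k, rfl⟩ := hj'
      simp only [pad, he.extend_apply]
      exact hsr k fun hk => hj (congrArg e hk)
    · simp only [pad, Function.extend_apply' _ _ _ hj']

theorem StrictlyQuadratic.comp_injective {m : ℕ} {e : Fin m → Fin n} (he : e.Injective)
    {φ : (Fin m → Bool) → Bool} (h : StrictlyQuadratic φ) :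
    StrictlyQuadratic (fun x => φ (x ∘ e)) := by
  obtain ⟨i, j, hij, hi, hj, hmax⟩ := h
  refine ⟨e i, e j, he.ne hij, (boolDependsOn_comp_iff he φ _).2 ⟨i, rfl, hi⟩,
    (boolDependsOn_comp_iff he φ _).2 ⟨j, rfl, hj⟩, fun l hl => ?_⟩
  obtain ⟨k, rfl, hk⟩ := (boolDependsOn_comp_iff he φ l).1 hl
  exact (hmax k hk).imp (congrArg e) (congrArg e)

end Dependence

section Padding

variable {m : ℕ}

theorem Fin.exists_castAdd_or_eq_castSucc_last_or_eq_last (i : Fin (m + 2)) :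
    (∃ k : Fin m, i = Fin.castAdd 2 k) ∨ i = Fin.castSucc (Fin.last m) ∨ i = Fin.last (m + 1) := by
  induction i using Fin.lastCases with
  | last => exact .inr (.inr rfl)
  | cast j =>
    induction j using Fin.lastCases with
    | last => exact .inr (.inl rfl)
    | cast k => exact .inl ⟨k, rfl⟩

def padTrue (u : Fin m → Bool) : Fin (m + 2) → Bool :=
  fun i => if h : (i : ℕ) < m then u ⟨i, h⟩ else true

@[simp]
theorem padTrue_castAdd (u : Fin m → Bool) (k : Fin m) : padTrue u (Fin.castAdd 2 k) = u k := by
  simp [padTrue]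

@[simp]
theorem padTrue_castSucc_last (u : Fin m → Bool) :
    padTrue u (Fin.castSucc (Fin.last m)) = true := by
  simp [padTrue]

@[simp]
theorem padTrue_last (u : Fin m → Bool) : padTrue u (Fin.last (m + 1)) = true := by
  simp [padTrue]

theorem padTrue_comp_castAdd (u : Fin m → Bool) : padTrue u ∘ Fin.castAdd 2 = u :=
  funext (padTrue_castAdd u)

theorem padTrue_injective : (padTrue : (Fin m → Bool) → Fin (m + 2) → Bool).Injective :=
  Function.LeftInverse.injective (g := (· ∘ Fin.castAdd 2)) padTrue_comp_castAdd

theorem Fin.castSucc_last_ne_last : Fin.castSucc (Fin.last m) ≠ Fin.last (m + 1) :=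
  Fin.castSucc_lt_last _ |>.ne

theorem Fin.castAdd_ne_last (k : Fin m) : Fin.castAdd 2 k ≠ Fin.last (m + 1) :=
  Fin.ne_of_lt (by simp [Fin.lt_def])

namespace IsPaddedSystem

variable {f : (Fin m → Bool) → (Fin m → Bool)} {g : (Fin (m + 2) → Bool) → (Fin (m + 2) → Bool)}

theorem coord_cases (h : IsPaddedSystem f g) (i : Fin (m + 2)) :
    (∃ k, StrictlyQuadratic (fun x => f x k) ∧ ∀ x, g x i = f (x ∘ Fin.castAdd 2) k) ∨
    (∃ a b, a ≠ b ∧ ∀ x, g x i = (x a && x b)) := by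
  obtain ⟨k, rfl⟩ | rfl | rfl := Fin.exists_castAdd_or_eq_castSucc_last_or_eq_last i
  · rcases h.castAdd k with hk | ⟨j, -, hj⟩
    · exact .inl ⟨k, hk⟩
    · exact .inr ⟨_, _, Fin.castAdd_ne_last j, hj⟩
  · exact .inr ⟨_, _, Fin.castSucc_last_ne_last, h.castSucc_last⟩
  · exact .inr ⟨_, _, Fin.castSucc_last_ne_last, h.last⟩

theorem cooperative (h : IsPaddedSystem f g) (hf : Cooperative f) : Cooperative g := by
  intro x y hxy i
  rcases h.coord_cases i with ⟨k, -, hk⟩ | ⟨a, b, -, hab⟩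
  · rw [hk, hk]
    exact hf _ _ (fun j => hxy _) k
  · rw [hab, hab]
    exact inf_le_inf (hxy a) (hxy b)

theorem strictlyQuadratic (h : IsPaddedSystem f g) (i : Fin (m + 2)) :
    StrictlyQuadratic fun x => g x i := by
  rcases h.coord_cases i with ⟨k, hq, hk⟩ | ⟨a, b, hne, hab⟩
  · simpa only [hk] using hq.comp_injective (Fin.castAdd_injective m 2)
  · simpa only [hab] using strictlyQuadratic_and hne

theorem semiconj_padTrue (h : IsPaddedSystem f g) : Function.Semiconj padTrue f g := by
  intro u
  funext i
  obtain ⟨k, rfl⟩ | rfl | rfl := Fin.exists_castAdd_or_eq_castSucc_last_or_eq_last i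
  · rcases h.castAdd k with ⟨-, hk⟩ | ⟨j, hfj, hj⟩
    · rw [hk, padTrue_comp_castAdd, padTrue_castAdd]
    · simp [hj, hfj]
  · simp [h.castSucc_last]
  · simp [h.last]

end IsPaddedSystem

end Padding

theorem stmt17_general {m : ℕ} (f : (Fin m → Bool) → (Fin m → Bool))
    (hf : Cooperative f)
    (L : ℕ) (s : Fin m → Bool)
    (hfix : f^[L] s = s)
    (hdist : Set.InjOn (fun t => f^[t] s) (Finset.range L))
    (g : (Fin (m + 2) → Bool) → (Fin (m + 2) → Bool))
    (hg : ∀ k : Fin m,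
      (StrictlyQuadratic (fun x => f x k) ∧
        ∀ x : Fin (m + 2) → Bool,
          g x (Fin.castAdd 2 k) = f (fun i => x (Fin.castAdd 2 i)) k) ∨
      (∃ i : Fin m, (∀ x, f x k = x i) ∧
        ∀ x : Fin (m + 2) → Bool,
          g x (Fin.castAdd 2 k) = (x (Fin.castAdd 2 i) && x (Fin.last (m + 1)))))
    (hga : ∀ x : Fin (m + 2) → Bool,
      g x (Fin.castSucc (Fin.last m)) = (x (Fin.castSucc (Fin.last m)) && x (Fin.last (m + 1))))
    (hgb : ∀ x : Fin (m + 2) → Bool,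
      g x (Fin.last (m + 1)) = (x (Fin.castSucc (Fin.last m)) && x (Fin.last (m + 1)))) :
    Cooperative g ∧
    (∀ k : Fin (m + 2), StrictlyQuadratic fun x => g x k) ∧
    (∀ k : Fin (m + 2), Set.ncard {i | BoolDependsOn (fun x => g x k) i} ≤ 2) ∧
    (g^[L] (fun i : Fin (m + 2) => if h : (i : ℕ) < m then s ⟨i, h⟩ else true) =
        (fun i : Fin (m + 2) => if h : (i : ℕ) < m then s ⟨i, h⟩ else true)) ∧
    Set.InjOn
      (fun t => g^[t] fun i : Fin (m + 2) => if h : (i : ℕ) < m then s ⟨i, h⟩ else true)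
      (Finset.range L) := by
  have hpad : IsPaddedSystem f g := ⟨hg, hga, hgb⟩
  have horbit (t : ℕ) : g^[t] (padTrue s) = padTrue (f^[t] s) :=
    (hpad.semiconj_padTrue.iterate_right t s).symm
  refine ⟨hpad.cooperative hf, hpad.strictlyQuadratic,
    fun k => (hpad.strictlyQuadratic k).ncard_boolDependsOn_le_two, ?_, ?_⟩
  · change g^[L] (padTrue s) = padTrue s
    rw [horbit, hfix]
  · change Set.InjOn (fun t => g^[t] (padTrue s)) _
    exact (padTrue_injective.comp_injOn hdist).congr fun t _ => (horbit t).symm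

/-- The construction adding two always-on variables: given an `m`-dimensional cooperative
system `f` with outdegrees at most 2 and a state `s` on a periodic orbit of length exactly
`L`, the `(m+2)`-dimensional system `g` (with `g_k = f_k` for strictly quadratic `f_k`,
`g_k = s_{i_k} ∧ s_{m+1}` for monic `f_k = s_{i_k}`, and `g_m = g_{m+1} = s_m ∧ s_{m+1}`)
is cooperative, has only strictly quadratic regulatory functions, has indegrees at most 2,
and the state `s* = (s, 1, 1)` lies on a periodic orbit of `g` of length exactly `L`. -/
theorem stmt17 {m : ℕ} (f : (Fin m → Bool) → (Fin m → Bool))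
    (hf : Cooperative f)
    (hout : ∀ i, Set.ncard {k | BoolDependsOn (fun x => f x k) i} ≤ 2)
    (L : ℕ) (hL : 0 < L) (s : Fin m → Bool)
    (hfix : f^[L] s = s)
    (hdist : Set.InjOn (fun t => f^[t] s) (Finset.range L))
    (g : (Fin (m + 2) → Bool) → (Fin (m + 2) → Bool))
    (hg : ∀ k : Fin m,
      (StrictlyQuadratic (fun x => f x k) ∧
        ∀ x : Fin (m + 2) → Bool,
          g x (Fin.castAdd 2 k) = f (fun i => x (Fin.castAdd 2 i)) k) ∨
      (∃ i : Fin m, (∀ x, f x k = x i) ∧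
        ∀ x : Fin (m + 2) → Bool,
          g x (Fin.castAdd 2 k) = (x (Fin.castAdd 2 i) && x (Fin.last (m + 1)))))
    (hga : ∀ x : Fin (m + 2) → Bool,
      g x (Fin.castSucc (Fin.last m)) = (x (Fin.castSucc (Fin.last m)) && x (Fin.last (m + 1))))
    (hgb : ∀ x : Fin (m + 2) → Bool,
      g x (Fin.last (m + 1)) = (x (Fin.castSucc (Fin.last m)) && x (Fin.last (m + 1)))) :
    Cooperative g ∧
    (∀ k : Fin (m + 2), StrictlyQuadratic fun x => g x k) ∧
    (∀ k : Fin (m + 2), Set.ncard {i | BoolDependsOn (fun x => g x k) i} ≤ 2) ∧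
    (g^[L] (fun i : Fin (m + 2) => if h : (i : ℕ) < m then s ⟨i, h⟩ else true) =
        (fun i : Fin (m + 2) => if h : (i : ℕ) < m then s ⟨i, h⟩ else true)) ∧
    Set.InjOn
      (fun t => g^[t] fun i : Fin (m + 2) => if h : (i : ℕ) < m then s ⟨i, h⟩ else true)
      (Finset.range L) :=
  stmt17_general f hf L s hfix hdist g hg hga hgb
end

section
/- For any real x with 0 < x < 1 and 0 < ε < 1 − x, the quantity λ = ((x/(x+ε))^{x+ε}) · (((1−x)/(1−x−ε))^{1−x−ε}) satisfies 0 < λ ≤ e^{−2ε²} < 1. -/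
/-!
Writing `D(p‖q) = p log (p/q) + (1-p) log ((1-p)/(1-q))` for the binary Kullback–Leibler
divergence, `λ = exp (-D(x+ε ‖ x))`, so the bound is Pinsker's inequality `D(p‖q) ≥ 2 (p-q)²`.
For fixed `p` and `q ≤ p`, the map `t ↦ D(p‖t) - 2 (p-t)²` has derivative
`(t - p) (1 / (t (1-t)) - 4)`, which is nonpositive on `[q, p]` because `t (1-t) ≤ 1/4`;
it vanishes at `t = p`, hence is nonnegative at `t = q`. The case `p ≤ q` follows from the
symmetry `D(1-p ‖ 1-q) = D(p‖q)`.
-/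

open Real Set

noncomputable def binaryKL (p q : ℝ) : ℝ :=
  p * log (p / q) + (1 - p) * log ((1 - p) / (1 - q))

lemma binaryKL_self (p : ℝ) : binaryKL p p = 0 := by
  simp [binaryKL]

lemma binaryKL_one_sub_one_sub (p q : ℝ) : binaryKL (1 - p) (1 - q) = binaryKL p q := by
  simp only [binaryKL, sub_sub_cancel]
  ring

lemma hasDerivAt_binaryKL_right {p t : ℝ} (hp : p ∈ Ioo 0 1) (ht : t ∈ Ioo 0 1) :
    HasDerivAt (binaryKL p) ((t - p) / (t * (1 - t))) t := by
  obtain ⟨hp0, hp1⟩ := hp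
  obtain ⟨ht0, ht1⟩ := ht
  have hlog : HasDerivAt (fun s => log (p / s)) (-t⁻¹) t := by
    have h := ((hasDerivAt_id t).log ht0.ne').const_sub (log p)
    refine (h.congr_of_eventuallyEq ?_).congr_deriv (by simp)
    filter_upwards [lt_mem_nhds ht0] with s hs
    rw [log_div hp0.ne' hs.ne', id]
  have hlog' : HasDerivAt (fun s => log ((1 - p) / (1 - s))) (1 - t)⁻¹ t := by
    have h := ((hasDerivAt_id t).const_sub 1).log (sub_ne_zero.2 ht1.ne')
    refine ((h.const_sub (log (1 - p))).congr_of_eventuallyEq ?_).congr_deriv (by simp [neg_div])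
    filter_upwards [gt_mem_nhds ht1] with s hs
    rw [log_div (sub_ne_zero.2 hp1.ne') (sub_ne_zero.2 hs.ne'), id]
  refine ((hlog.const_mul p).add (hlog'.const_mul (1 - p))).congr_deriv ?_
  field_simp [ht0.ne', (sub_pos.2 ht1).ne']
  ring

theorem two_mul_sq_le_binaryKL {p q : ℝ} (hp : p ∈ Ioo 0 1) (hq : q ∈ Ioo 0 1) :
    2 * (p - q) ^ 2 ≤ binaryKL p q := by
  wlog hqp : q ≤ p generalizing p q
  · have h := this (p := 1 - p) (q := 1 - q) ⟨by linarith [hp.2], by linarith [hp.1]⟩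
      ⟨by linarith [hq.2], by linarith [hq.1]⟩ (by linarith)
    rwa [binaryKL_one_sub_one_sub, sub_sub_sub_cancel_left, ← neg_sub, neg_sq] at h
  set gap : ℝ → ℝ := fun t => binaryKL p t - 2 * (p - t) ^ 2
  have hIcc : Icc q p ⊆ Ioo 0 1 := Icc_subset_Ioo hq.1 hp.2
  have hgap : ∀ t ∈ Icc q p, HasDerivAt gap ((t - p) * (1 / (t * (1 - t)) - 4)) t := by
    intro t ht
    obtain ⟨ht0, ht1⟩ := hIcc ht
    have hsq : HasDerivAt (fun s => 2 * (p - s) ^ 2) (-(4 * (p - t))) t := by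
      have h := (((hasDerivAt_id t).const_sub p).pow 2).const_mul 2
      simp only [id, Pi.pow_apply, Nat.cast_ofNat] at h
      exact h.congr_deriv (by ring)
    refine ((hasDerivAt_binaryKL_right hp (hIcc ht)).sub hsq).congr_deriv ?_
    field_simp [ht0.ne', (sub_pos.2 ht1).ne']
    ring
  have hanti : AntitoneOn gap (Icc q p) := by
    refine antitoneOn_of_hasDerivWithinAt_nonpos (convex_Icc q p)
      (fun t ht => (hgap t ht).continuousAt.continuousWithinAt)
      (fun t ht => (hgap t (interior_subset ht)).hasDerivWithinAt) fun t ht => ?_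
    rw [interior_Icc] at ht
    obtain ⟨ht0, ht1⟩ := hIcc (Ioo_subset_Icc_self ht)
    have hquarter : 4 ≤ 1 / (t * (1 - t)) := by
      rw [le_div_iff₀ (mul_pos ht0 (sub_pos.2 ht1))]
      nlinarith [sq_nonneg (2 * t - 1)]
    exact mul_nonpos_of_nonpos_of_nonneg (by linarith [ht.2]) (by linarith)
  have hgap_le := hanti (left_mem_Icc.2 hqp) (right_mem_Icc.2 hqp) hqp
  simp only [gap, binaryKL_self, sub_self] at hgap_le
  linarith

lemma rpow_mul_rpow_eq_exp_neg_binaryKL {p q : ℝ} (hp : p ∈ Ioo 0 1) (hq : q ∈ Ioo 0 1) :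
    (q / p) ^ p * ((1 - q) / (1 - p)) ^ (1 - p) = exp (-binaryKL p q) := by
  have log_div_swap : ∀ a b : ℝ, log (a / b) = -log (b / a) := fun a b => by
    rw [← log_inv, inv_div]
  rw [rpow_def_of_pos (div_pos hq.1 hp.1), rpow_def_of_pos (div_pos (sub_pos.2 hq.2)
    (sub_pos.2 hp.2)), ← exp_add, binaryKL, log_div_swap q, log_div_swap (1 - q)]
  ring_nf

/-- The Chernoff–Hoeffding relative-entropy factor is at most `exp(-2ε²) < 1`. -/
theorem stmt19 (x ε : ℝ) (hx0 : 0 < x) (hx1 : x < 1) (hε0 : 0 < ε) (hε1 : ε < 1 - x) :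
    0 < (x / (x + ε)) ^ (x + ε) * ((1 - x) / (1 - x - ε)) ^ (1 - x - ε) ∧
    (x / (x + ε)) ^ (x + ε) * ((1 - x) / (1 - x - ε)) ^ (1 - x - ε) ≤
      Real.exp (-2 * ε ^ 2) ∧
    Real.exp (-2 * ε ^ 2) < 1 := by
  have hp : x + ε ∈ Ioo 0 1 := ⟨by linarith, by linarith⟩
  have hq : x ∈ Ioo 0 1 := ⟨hx0, hx1⟩
  have hpinsker := two_mul_sq_le_binaryKL hp hq
  rw [add_sub_cancel_left] at hpinsker
  rw [sub_sub, rpow_mul_rpow_eq_exp_neg_binaryKL hp hq]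
  exact ⟨exp_pos _, exp_le_exp.2 (by linarith), exp_lt_one_iff.2 (by nlinarith)⟩
end
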